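/- Let m ≥ 1, l₁,…,l_m > 0, L a hermitian endomorphism of ℂ^{2m}, and G(l) the block matrix [[D^{-1}, −D^{-1}],[−D^{-1}, D^{-1}]] with D = diag(l₁,…,l_m). Let L⁺ be the Moore–Penrose pseudo-inverse of L. Then all eigenvalues of L⁺ G(l) are real. Moreover, if every positive eigenvalue λ of L satisfies λ > 2/min_e l_e, then every eigenvalue τ of L⁺ G(l) satisfies τ < 1. -/

import Mathlib

open Matrix

/-- The block matrix G(l) = [[D⁻¹, −D⁻¹],[−D⁻¹, D⁻¹]] with D = diag(l₁,…,l_m). -/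
noncomputable def Gmat (m : ℕ) (l : Fin m → ℝ) :
    Matrix (Fin m ⊕ Fin m) (Fin m ⊕ Fin m) ℂ :=
  Matrix.of fun i j =>
    match i, j with
    | Sum.inl a, Sum.inl b => if a = b then ((l a : ℂ))⁻¹ else 0
    | Sum.inl a, Sum.inr b => if a = b then -((l a : ℂ))⁻¹ else 0
    | Sum.inr a, Sum.inl b => if a = b then -((l a : ℂ))⁻¹ else 0
    | Sum.inr a, Sum.inr b => if a = b then ((l a : ℂ))⁻¹ else 0

/-- G(l) as a linear operator on the Euclidean space ℂ^{2m}. -/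
noncomputable def Glin (m : ℕ) (l : Fin m → ℝ) :
    EuclideanSpace ℂ (Fin m ⊕ Fin m) →ₗ[ℂ] EuclideanSpace ℂ (Fin m ⊕ Fin m) :=
  Matrix.toEuclideanLin (Gmat m l)


/-! Both `L⁺` and `G = G(l)` are symmetric, and `G² ≤ (2 / min l) • G`. If `L⁺ G v = τ v` with
`τ ≠ 0`, then `G v ≠ 0`, so `⟪G v, v⟫ > 0`, and `⟪L⁺ G v, G v⟫ = conj τ ⟪G v, v⟫` is a relation
between real numbers: `τ` is real. The nonzero eigenvalues of `L⁺` are the inverses of those of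
`L`, so under the spectral gap hypothesis every eigenvalue of `L⁺` is `< min l / 2`; then
`τ ⟪G v, v⟫ = ⟪L⁺ G v, G v⟫ < (min l / 2) ‖G v‖² ≤ ⟪G v, v⟫`, i.e. `τ < 1`. -/

open Module End RCLike ComplexConjugate

section InnerProductSpace

variable {𝕜 E : Type*} [RCLike 𝕜] [NormedAddCommGroup E] [InnerProductSpace 𝕜 E]

local notation "⟪" x ", " y "⟫" => inner 𝕜 x y

structure IsPseudoInverse (L Lp : E →ₗ[𝕜] E) : Prop where
  inv_apply_of_mem_ker : ∀ v ∈ LinearMap.ker L, Lp v = 0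
  inv_apply_apply_of_mem_orthogonal : ∀ v ∈ (LinearMap.ker L)ᗮ, Lp (L v) = v

variable {L Lp P G : E →ₗ[𝕜] E}

theorem IsPseudoInverse.inv_apply_add (h : IsPseudoInverse L Lp) {y a : E}
    (hy : y ∈ LinearMap.ker L) (ha : a ∈ (LinearMap.ker L)ᗮ) : Lp (y + L a) = a := by
  rw [map_add, h.inv_apply_of_mem_ker y hy, h.inv_apply_apply_of_mem_orthogonal a ha, zero_add]

theorem LinearMap.IsSymmetric.apply_mem_orthogonal_ker (hL : L.IsSymmetric) (a : E) :
    L a ∈ (LinearMap.ker L)ᗮ := fun y hy => by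
  rw [← hL, LinearMap.mem_ker.mp hy, inner_zero_left]

section Composition

variable {τ : 𝕜} {v : E}

theorem apply_ne_zero_of_hasEigenvector_comp (hv : HasEigenvector (P ∘ₗ G) τ v) (hτ : τ ≠ 0) :
    G v ≠ 0 := by
  intro hGv
  have : τ • v = 0 := by rw [← hv.apply_eq_smul, LinearMap.comp_apply, hGv, map_zero]
  exact hv.2 ((smul_eq_zero.mp this).resolve_left hτ)

theorem re_inner_comp_eq_conj_mul (hP : P.IsSymmetric) (hG : G.IsSymmetric)
    (hv : HasEigenvector (P ∘ₗ G) τ v) :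
    (re ⟪P (G v), G v⟫ : 𝕜) = conj τ * (re ⟪G v, v⟫ : 𝕜) := by
  have : P (G v) = τ • v := hv.apply_eq_smul
  rw [hP.coe_re_inner_apply_self, hG.coe_re_inner_apply_self, this, inner_smul_left, hG v v]

theorem im_eq_zero_of_hasEigenvalue_comp (hP : P.IsSymmetric) (hG : G.IsSymmetric) {κ : ℝ}
    (hGG : ∀ v, ‖G v‖ ^ 2 ≤ κ * re ⟪G v, v⟫) (hτ : HasEigenvalue (P ∘ₗ G) τ) : im τ = 0 := by
  obtain ⟨v, hv⟩ := hτ.exists_hasEigenvector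
  by_contra hτ0
  have hGv := apply_ne_zero_of_hasEigenvector_comp hv (fun h => hτ0 (by simp [h]))
  have hr : re ⟪G v, v⟫ ≠ 0 := by
    intro hr
    have := hGG v
    rw [hr, mul_zero] at this
    exact hGv (by simpa using this)
  have := congrArg im (re_inner_comp_eq_conj_mul hP hG hv)
  rw [ofReal_im, mul_im, ofReal_im, ofReal_re, conj_im, mul_zero, zero_add] at this
  exact hτ0 (neg_eq_zero.mp ((mul_eq_zero.mp this.symm).resolve_right hr))

theorem re_lt_one_of_hasEigenvalue_comp (hP : P.IsSymmetric) (hG : G.IsSymmetric) {κ : ℝ}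
    (hκ : 0 < κ) (hGG : ∀ v, ‖G v‖ ^ 2 ≤ κ * re ⟪G v, v⟫)
    (hPκ : ∀ w ≠ 0, re ⟪P w, w⟫ < κ⁻¹ * ‖w‖ ^ 2) (hτ : HasEigenvalue (P ∘ₗ G) τ) :
    re τ < 1 := by
  obtain ⟨v, hv⟩ := hτ.exists_hasEigenvector
  rcases eq_or_ne τ 0 with rfl | hτ0
  · simp
  have hGv := apply_ne_zero_of_hasEigenvector_comp hv hτ0
  have hr : 0 < re ⟪G v, v⟫ :=
    pos_of_mul_pos_right ((by positivity : 0 < ‖G v‖ ^ 2).trans_le (hGG v)) hκ.le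
  have h_re : re ⟪P (G v), G v⟫ = re τ * re ⟪G v, v⟫ := by
    simpa [mul_re] using congrArg re (re_inner_comp_eq_conj_mul hP hG hv)
  have : re τ * re ⟪G v, v⟫ < 1 * re ⟪G v, v⟫ :=
    calc re τ * re ⟪G v, v⟫ = re ⟪P (G v), G v⟫ := h_re.symm
      _ < κ⁻¹ * ‖G v‖ ^ 2 := hPκ _ hGv
      _ ≤ κ⁻¹ * (κ * re ⟪G v, v⟫) := by gcongr; exact hGG v
      _ = 1 * re ⟪G v, v⟫ := by field_simp
  exact lt_of_mul_lt_mul_right this hr.le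

end Composition

variable [FiniteDimensional 𝕜 E]

theorem LinearMap.IsSymmetric.exists_add_apply_eq (hL : L.IsSymmetric) (x : E) :
    ∃ y ∈ LinearMap.ker L, ∃ a ∈ (LinearMap.ker L)ᗮ, y + L a = x := by
  obtain ⟨y, hy, z, hz, rfl⟩ := (LinearMap.ker L).exists_add_mem_mem_orthogonal x
  rw [← hL.orthogonal_range, Submodule.orthogonal_orthogonal] at hz
  obtain ⟨b, rfl⟩ := hz
  obtain ⟨k, hk, a, ha, rfl⟩ := (LinearMap.ker L).exists_add_mem_mem_orthogonal b
  exact ⟨y, hy, a, ha, by rw [map_add, LinearMap.mem_ker.mp hk, zero_add]⟩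

theorem LinearMap.IsSymmetric.re_inner_lt_of_forall_hasEigenvalue_lt {T : E →ₗ[𝕜] E}
    (hT : T.IsSymmetric) {b : ℝ} (hb : ∀ μ : ℝ, HasEigenvalue T μ → μ < b) {w : E} (hw : w ≠ 0) :
    re ⟪T w, w⟫ < b * ‖w‖ ^ 2 := by
  let B := hT.eigenvectorBasis rfl
  let μ := hT.eigenvalues rfl
  have h_inner : ⟪T w, w⟫ = ((∑ i, μ i * ‖B.repr w i‖ ^ 2 : ℝ) : 𝕜) := by
    rw [← B.repr.inner_map_map, PiLp.inner_apply, ofReal_sum]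
    refine Finset.sum_congr rfl fun i _ => ?_
    rw [hT.eigenvectorBasis_apply_self_apply, inner_apply, map_mul, conj_ofReal, mul_left_comm,
      mul_conj, ofReal_mul, ofReal_pow]
  have h_norm : ‖w‖ ^ 2 = ∑ i, ‖B.repr w i‖ ^ 2 := by
    rw [← B.repr.norm_map, EuclideanSpace.norm_sq_eq]
  obtain ⟨i, hi⟩ : ∃ i, B.repr w i ≠ 0 := by
    by_contra! h0
    exact hw (B.repr.map_eq_zero_iff.mp (PiLp.ext h0))
  rw [h_inner, ofReal_re, h_norm, Finset.mul_sum]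
  refine Finset.sum_lt_sum (fun j _ => ?_) ⟨i, Finset.mem_univ i, ?_⟩
  · gcongr
    exact (hb _ (hT.hasEigenvalue_eigenvalues rfl j)).le
  · gcongr
    exact hb _ (hT.hasEigenvalue_eigenvalues rfl i)

namespace IsPseudoInverse

theorem isSymmetric (h : IsPseudoInverse L Lp) (hL : L.IsSymmetric) : Lp.IsSymmetric := by
  intro x w
  obtain ⟨y, hy, a, ha, rfl⟩ := hL.exists_add_apply_eq x
  obtain ⟨z, hz, b, hb, rfl⟩ := hL.exists_add_apply_eq w
  rw [h.inv_apply_add hy ha, h.inv_apply_add hz hb, inner_add_left, inner_add_right,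
    Submodule.inner_left_of_mem_orthogonal hz ha, Submodule.inner_right_of_mem_orthogonal hy hb,
    hL a b]

theorem inv_apply_mem_orthogonal (h : IsPseudoInverse L Lp) (hL : L.IsSymmetric) (x : E) :
    Lp x ∈ (LinearMap.ker L)ᗮ := by
  obtain ⟨y, hy, a, ha, rfl⟩ := hL.exists_add_apply_eq x
  rwa [h.inv_apply_add hy ha]

theorem apply_inv_apply_of_mem_orthogonal (h : IsPseudoInverse L Lp) (hL : L.IsSymmetric)
    {x : E} (hx : x ∈ (LinearMap.ker L)ᗮ) : L (Lp x) = x := by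
  obtain ⟨y, hy, a, ha, rfl⟩ := hL.exists_add_apply_eq x
  have hy0 : y = 0 := by
    refine Submodule.disjoint_def.mp (LinearMap.ker L).orthogonal_disjoint y hy ?_
    simpa using Submodule.sub_mem _ hx (hL.apply_mem_orthogonal_ker a)
  rw [h.inv_apply_add hy ha, hy0, zero_add]

theorem hasEigenvalue_inv (h : IsPseudoInverse L Lp) (hL : L.IsSymmetric) {μ : 𝕜} (hμ : μ ≠ 0)
    (hLp : HasEigenvalue Lp μ) : HasEigenvalue L μ⁻¹ := by
  obtain ⟨u, hu⟩ := hLp.exists_hasEigenvector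
  have hLpu : Lp u = μ • u := hu.apply_eq_smul
  have hu_mem : u ∈ (LinearMap.ker L)ᗮ := by
    rw [← inv_smul_smul₀ hμ u, ← hLpu]
    exact Submodule.smul_mem _ _ (h.inv_apply_mem_orthogonal hL u)
  refine hasEigenvalue_of_hasEigenvector ⟨mem_eigenspace_iff.mpr ?_, hu.2⟩
  rw [eq_inv_smul_iff₀ hμ, ← map_smul, ← hLpu, h.apply_inv_apply_of_mem_orthogonal hL hu_mem]

theorem eigenvalue_lt_inv (h : IsPseudoInverse L Lp) (hL : L.IsSymmetric) {b : ℝ} (hb : 0 < b)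
    (hLb : ∀ ν : ℝ, HasEigenvalue L ν → 0 < ν → b < ν) {μ : ℝ} (hμ : HasEigenvalue Lp μ) :
    μ < b⁻¹ := by
  rcases le_or_gt μ 0 with hμ0 | hμ0
  · exact hμ0.trans_lt (inv_pos.mpr hb)
  have := hLb μ⁻¹ (by simpa using h.hasEigenvalue_inv hL (by exact_mod_cast hμ0.ne') hμ)
    (inv_pos.mpr hμ0)
  exact (lt_inv_comm₀ hb hμ0).mp this

end IsPseudoInverse

end InnerProductSpace

section Gmat

variable {m : ℕ} (l : Fin m → ℝ) (v : EuclideanSpace ℂ (Fin m ⊕ Fin m))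

theorem Glin_apply_inl (a : Fin m) :
    Glin m l v (Sum.inl a) = (l a : ℂ)⁻¹ * (v (Sum.inl a) - v (Sum.inr a)) := by
  simp [Glin, Gmat, Matrix.mulVec, dotProduct, Fintype.sum_sum_type, ite_mul]
  ring

theorem Glin_apply_inr (a : Fin m) :
    Glin m l v (Sum.inr a) = -((l a : ℂ)⁻¹ * (v (Sum.inl a) - v (Sum.inr a))) := by
  simp [Glin, Gmat, Matrix.mulVec, dotProduct, Fintype.sum_sum_type, ite_mul]
  ring

theorem inner_Glin_apply_self :
    inner ℂ (Glin m l v) v = ((∑ a, (l a)⁻¹ * ‖v (Sum.inl a) - v (Sum.inr a)‖ ^ 2 : ℝ) : ℂ) := by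
  rw [PiLp.inner_apply, Fintype.sum_sum_type, ← Finset.sum_add_distrib, Complex.ofReal_sum]
  refine Finset.sum_congr rfl fun a _ => ?_
  rw [Glin_apply_inl, Glin_apply_inr, inner_neg_left, ← sub_eq_add_neg, ← inner_sub_right,
    RCLike.inner_apply, map_mul, map_inv₀, Complex.conj_ofReal, mul_left_comm,
    Complex.mul_conj']
  push_cast
  rfl

theorem norm_Glin_sq :
    ‖Glin m l v‖ ^ 2 = ∑ a, 2 * ((l a)⁻¹ ^ 2 * ‖v (Sum.inl a) - v (Sum.inr a)‖ ^ 2) := by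
  rw [EuclideanSpace.norm_sq_eq, Fintype.sum_sum_type, ← Finset.sum_add_distrib]
  refine Finset.sum_congr rfl fun a _ => ?_
  rw [Glin_apply_inl, Glin_apply_inr, norm_neg, norm_mul, norm_inv, Complex.norm_real,
    Real.norm_eq_abs, mul_pow, inv_pow, sq_abs]
  ring

theorem Glin_isSymmetric : (Glin m l).IsSymmetric :=
  (LinearMap.isSymmetric_iff_inner_map_self_real _).mpr fun v => by
    rw [inner_Glin_apply_self, Complex.conj_ofReal]

theorem norm_Glin_sq_le {c : ℝ} (hc : 0 < c) (hcl : ∀ a, c ≤ l a) :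
    ‖Glin m l v‖ ^ 2 ≤ 2 / c * re (inner ℂ (Glin m l v) v) := by
  rw [norm_Glin_sq, inner_Glin_apply_self, re_to_complex, Complex.ofReal_re, Finset.mul_sum]
  refine Finset.sum_le_sum fun a _ => ?_
  have hinv : (l a)⁻¹ ≤ c⁻¹ := inv_anti₀ hc (hcl a)
  have hla : 0 ≤ (l a)⁻¹ := inv_nonneg.mpr (hc.le.trans (hcl a))
  calc 2 * ((l a)⁻¹ ^ 2 * ‖v (Sum.inl a) - v (Sum.inr a)‖ ^ 2)
      = 2 * (l a)⁻¹ * ((l a)⁻¹ * ‖v (Sum.inl a) - v (Sum.inr a)‖ ^ 2) := by ring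
    _ ≤ 2 * c⁻¹ * ((l a)⁻¹ * ‖v (Sum.inl a) - v (Sum.inr a)‖ ^ 2) := by gcongr
    _ = 2 / c * ((l a)⁻¹ * ‖v (Sum.inl a) - v (Sum.inr a)‖ ^ 2) := by ring

end Gmat

theorem stmt10 {m : ℕ} (hm : 0 < m) (l : Fin m → ℝ) (hl : ∀ i, 0 < l i)
    (L Lp : EuclideanSpace ℂ (Fin m ⊕ Fin m) →ₗ[ℂ] EuclideanSpace ℂ (Fin m ⊕ Fin m))
    (hL : L.IsSymmetric)
    (hLp0 : ∀ v ∈ LinearMap.ker L, Lp v = 0)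
    (hLpinv : ∀ v ∈ (LinearMap.ker L)ᗮ, Lp (L v) = v) :
    (∀ τ ∈ spectrum ℂ (Lp ∘ₗ Glin m l), τ.im = 0) ∧
    ((∀ μ ∈ spectrum ℂ L, 0 < μ.re → ∀ e : Fin m, 2 / l e < μ.re) →
      ∀ τ ∈ spectrum ℂ (Lp ∘ₗ Glin m l), τ.re < 1) := by
  have hpinv : IsPseudoInverse L Lp := ⟨hLp0, hLpinv⟩
  have hLp : Lp.IsSymmetric := hpinv.isSymmetric hL
  obtain ⟨e, -, he⟩ := Finset.exists_min_image Finset.univ l ⟨⟨0, hm⟩, Finset.mem_univ _⟩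
  have hκ : 0 < 2 / l e := div_pos two_pos (hl e)
  have hGG v := norm_Glin_sq_le l v (hl e) fun a => he a (Finset.mem_univ a)
  refine ⟨fun τ hτ => ?_, fun hspec τ hτ => ?_⟩
  · exact im_eq_zero_of_hasEigenvalue_comp hLp (Glin_isSymmetric l) hGG
      (hasEigenvalue_iff_mem_spectrum.mpr hτ)
  · have hLp_eig : ∀ μ : ℝ, HasEigenvalue Lp μ → μ < (2 / l e)⁻¹ := fun μ hμ =>
      hpinv.eigenvalue_lt_inv hL hκ
        (fun ν hν hν0 => by simpa using hspec ν hν.mem_spectrum (by simpa using hν0) e) hμ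
    exact re_lt_one_of_hasEigenvalue_comp hLp (Glin_isSymmetric l) hκ hGG
      (fun w hw => hLp.re_inner_lt_of_forall_hasEigenvalue_lt hLp_eig hw)
      (hasEigenvalue_iff_mem_spectrum.mpr hτ)
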